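/- arXiv:1512.00734 — 4 statements merged into one kernel-verified Lean document; each statement's English description precedes it below -/
import Mathlib

section
/- If γ : [0, L] → ℝ² is a closed C¹ curve parametrized by arc length (so ‖γ'(s)‖ = 1 for all s and γ(0) = γ(L)), then the enclosed signed area Q = (1/2)∫₀^L (γ₁ γ₂' − γ₂ γ₁') ds satisfies L² ≥ 4πQ. -/
/-!
Hurwitz's Fourier-series proof. Identify the plane with `ℂ` and write `γ = y + i z` with Fourier
coefficients `cₙ` on `[0, L]`. Integrating by parts, `γ'` has coefficients `(2π i n / L) cₙ`, so by
Parseval `L = ∫ ‖γ'‖² = (4π² / L) ∑ n² ‖cₙ‖²`, while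
`2Q = Im ∫ conj γ · γ' = 2π ∑ n ‖cₙ‖²`. Since `n ≤ n²` for every integer `n`, `4πQ ≤ L²`.
-/

open Real Set intervalIntegral
open MeasureTheory AddCircle Complex ComplexConjugate

theorem ContinuousOn.memLp_restrict_Ioc {E : Type*} [NormedAddCommGroup E] {a b : ℝ} {f : ℝ → E}
    {p : ENNReal} (hf : ContinuousOn f (Icc a b)) : MemLp f p (volume.restrict (Ioc a b)) := by
  obtain ⟨C, hC⟩ := isCompact_Icc.exists_bound_of_continuousOn hf
  refine MemLp.of_bound ((hf.mono Ioc_subset_Icc_self).aestronglyMeasurable measurableSet_Ioc) C ?_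
  exact (ae_restrict_iff' measurableSet_Ioc).2 (.of_forall fun x hx => hC x (Ioc_subset_Icc_self hx))

theorem hasSum_conj_fourierCoeffOn_mul {a b : ℝ} {f g : ℝ → ℂ} (hab : a < b)
    (hf : MemLp f 2 (volume.restrict (Ioc a b))) (hg : MemLp g 2 (volume.restrict (Ioc a b))) :
    HasSum (fun i => conj (fourierCoeffOn hab f i) * fourierCoeffOn hab g i)
      ((b - a)⁻¹ • ∫ x in a..b, conj (f x) * g x) := by
  have := Fact.mk (by linarith : 0 < b - a)
  rw [← add_sub_cancel a b] at hf hg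
  have hf' := hf.memLp_liftIoc.haarAddCircle
  have hg' := hg.memLp_liftIoc.haarAddCircle
  have hcoeff {h : ℝ → ℂ} (hh : MemLp (liftIoc (b - a) a h) 2 haarAddCircle) (i : ℤ) :
      inner ℂ (fourierBasis i) hh.toLp = fourierCoeffOn hab h i := by
    rw [← fourierBasis.repr_apply_apply, fourierBasis_repr, fourierCoeff_congr_ae hh.coeFn_toLp,
      fourierCoeff_liftIoc_eq]
    simp
  have hinner : inner ℂ hf'.toLp hg'.toLp = (b - a)⁻¹ • ∫ x in a..b, conj (f x) * g x := by
    rw [L2.inner_def, integral_congr_ae (g := liftIoc (b - a) a fun x => conj (f x) * g x),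
      integral_haarAddCircle, integral_liftIoc_eq_intervalIntegral, add_sub_cancel]
    filter_upwards [hf'.coeFn_toLp, hg'.coeFn_toLp] with t hft hgt
    rw [hft, hgt, RCLike.inner_apply, mul_comm]
    rfl
  have h := fourierBasis.hasSum_inner_mul_inner hf'.toLp hg'.toLp
  rw [hinner] at h
  simpa only [← inner_conj_symm hf'.toLp, hcoeff] using h

theorem fourierCoeffOn_deriv_of_periodic {a b : ℝ} (hab : a < b) {f f' : ℝ → ℂ}
    (hf : ∀ x ∈ Icc a b, HasDerivAt f (f' x) x) (hf' : IntervalIntegrable f' volume a b)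
    (hper : f a = f b) (n : ℤ) :
    fourierCoeffOn hab f' n = (2 * π * n / (b - a) : ℝ) * I * fourierCoeffOn hab f n := by
  rw [← uIcc_of_le hab.le] at hf
  rcases eq_or_ne n 0 with rfl | hn
  · rw [fourierCoeffOn_eq_integral]
    simp [integral_eq_sub_of_hasDerivAt hf hf', hper]
  · rw [fourierCoeffOn_of_hasDerivAt hab hn hf hf', hper, sub_self, mul_zero, zero_sub]
    have : (b - a : ℂ) ≠ 0 := sub_ne_zero.2 (by exact_mod_cast hab.ne')
    push_cast
    field_simp

section PeriodicCurve

variable {a b : ℝ} (hab : a < b) {γ γ' : ℝ → ℂ} (hγ : ∀ x ∈ Icc a b, HasDerivAt γ (γ' x) x)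
  (hγ' : ContinuousOn γ' (Icc a b)) (hper : γ a = γ b)
include hab hγ hγ' hper

theorem hasSum_int_mul_sq_fourierCoeffOn :
    HasSum (fun n : ℤ => 2 * π * n * ‖fourierCoeffOn hab γ n‖ ^ 2)
      (∫ x in a..b, conj (γ x) * γ' x).im := by
  have hγc : ContinuousOn γ (Icc a b) := fun x hx => (hγ x hx).continuousAt.continuousWithinAt
  have h := (hasSum_conj_fourierCoeffOn_mul hab hγc.memLp_restrict_Ioc
    hγ'.memLp_restrict_Ioc).mapL imCLM
  have hba : b - a ≠ 0 := sub_ne_zero.2 hab.ne'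
  have hterm (n : ℤ) : (b - a) * imCLM (conj (fourierCoeffOn hab γ n) * fourierCoeffOn hab γ' n) =
      2 * π * n * ‖fourierCoeffOn hab γ n‖ ^ 2 := by
    rw [imCLM_apply, fourierCoeffOn_deriv_of_periodic hab hγ (hγ'.intervalIntegrable_of_Icc hab.le)
      hper, mul_left_comm, Complex.conj_mul', ← ofReal_pow, mul_right_comm, ← ofReal_mul,
      mul_I_im, ofReal_re]
    field_simp
  have hvalue : (b - a) * imCLM ((b - a)⁻¹ • ∫ x in a..b, conj (γ x) * γ' x) =
      (∫ x in a..b, conj (γ x) * γ' x).im := by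
    rw [imCLM_apply, Complex.real_smul, Complex.im_ofReal_mul, ← mul_assoc, mul_inv_cancel₀ hba,
      one_mul]
  simpa only [hterm, hvalue] using h.mul_left (b - a)

theorem hasSum_int_sq_mul_sq_fourierCoeffOn :
    HasSum (fun n : ℤ => 4 * π ^ 2 / (b - a) * n ^ 2 * ‖fourierCoeffOn hab γ n‖ ^ 2)
      (∫ x in a..b, ‖γ' x‖ ^ 2) := by
  have h := hasSum_sq_fourierCoeffOn hab (hγ'.memLp_restrict_Ioc (p := 2))
  have hba : b - a ≠ 0 := sub_ne_zero.2 hab.ne'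
  have hterm (n : ℤ) : (b - a) * ‖fourierCoeffOn hab γ' n‖ ^ 2 =
      4 * π ^ 2 / (b - a) * n ^ 2 * ‖fourierCoeffOn hab γ n‖ ^ 2 := by
    rw [fourierCoeffOn_deriv_of_periodic hab hγ (hγ'.intervalIntegrable_of_Icc hab.le) hper]
    simp only [norm_mul, norm_I, norm_real, Real.norm_eq_abs, mul_one, mul_pow, sq_abs]
    field_simp
    ring
  rw [smul_eq_mul] at h
  simpa only [hterm, ← mul_assoc, mul_inv_cancel₀ hba, one_mul] using h.mul_left (b - a)

theorem two_pi_mul_im_integral_conj_mul_deriv_le :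
    2 * π * (∫ x in a..b, conj (γ x) * γ' x).im ≤ (b - a) * ∫ x in a..b, ‖γ' x‖ ^ 2 := by
  refine hasSum_le (fun n => ?_) ((hasSum_int_mul_sq_fourierCoeffOn hab hγ hγ' hper).mul_left _)
    ((hasSum_int_sq_mul_sq_fourierCoeffOn hab hγ hγ' hper).mul_left _)
  have hba : b - a ≠ 0 := sub_ne_zero.2 hab.ne'
  have hn : (n : ℝ) ≤ n ^ 2 := by exact_mod_cast Int.le_self_sq n
  calc 2 * π * (2 * π * n * ‖fourierCoeffOn hab γ n‖ ^ 2)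
      = 4 * π ^ 2 * ‖fourierCoeffOn hab γ n‖ ^ 2 * n := by ring
    _ ≤ 4 * π ^ 2 * ‖fourierCoeffOn hab γ n‖ ^ 2 * n ^ 2 := by gcongr
    _ = (b - a) * (4 * π ^ 2 / (b - a) * n ^ 2 * ‖fourierCoeffOn hab γ n‖ ^ 2) := by
      field_simp

end PeriodicCurve

theorem schwarz_IIa (L : ℝ) (hL : 0 < L) (y z y' z' : ℝ → ℝ)
    (hy : ∀ s ∈ Set.Icc 0 L, HasDerivAt y (y' s) s)
    (hz : ∀ s ∈ Set.Icc 0 L, HasDerivAt z (z' s) s)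
    (hy' : ContinuousOn y' (Set.Icc 0 L))
    (hz' : ContinuousOn z' (Set.Icc 0 L))
    (hunit : ∀ s ∈ Set.Icc 0 L, y' s ^ 2 + z' s ^ 2 = 1)
    (hcy : y 0 = y L) (hcz : z 0 = z L)
    (Q : ℝ)
    (hQ : Q = (1/2) * ∫ s in (0:ℝ)..L, (y s * z' s - z s * y' s)) :
    L ^ 2 ≥ 4 * Real.pi * Q := by
  set γ : ℝ → ℂ := fun s => y s + z s * I
  set γ' : ℝ → ℂ := fun s => y' s + z' s * I
  have hγ : ∀ s ∈ Icc 0 L, HasDerivAt γ (γ' s) s := fun s hs =>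
    (hy s hs).ofReal_comp.add ((hz s hs).ofReal_comp.mul_const I)
  have hγ' : ContinuousOn γ' (Icc 0 L) := by fun_prop
  have harea : (∫ s in (0:ℝ)..L, conj (γ s) * γ' s).im = 2 * Q := by
    have hγc : ContinuousOn γ (Icc 0 L) := fun s hs => (hγ s hs).continuousAt.continuousWithinAt
    rw [hQ, ← imCLM_apply, ← imCLM.intervalIntegral_comp_comm (f := fun s => conj (γ s) * γ' s)
      (((continuous_conj.comp_continuousOn hγc).mul hγ').intervalIntegrable_of_Icc hL.le)]
    simp [γ, γ', ← sub_eq_add_neg]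
  have hlength : ∫ s in (0:ℝ)..L, ‖γ' s‖ ^ 2 = L := by
    rw [integral_congr (g := fun _ => (1 : ℝ)) fun s hs => ?_, intervalIntegral.integral_const,
      sub_zero, smul_eq_mul, mul_one]
    rw [uIcc_of_le hL.le] at hs
    rw [Complex.sq_norm, Complex.normSq_add_mul_I, hunit s hs]
  have h := two_pi_mul_im_integral_conj_mul_deriv_le hL hγ hγ' (by simp [γ, hcy, hcz])
  rw [harea, hlength, sub_zero] at h
  linarith
end

section
/- The function f(φ) = (φ − sin φ cos φ)/(2 sin² φ) is strictly increasing on (−π, 0) and on (0, π), with derivative f'(φ) = (tan φ − φ)/(tan φ · sin² φ), which is positive for all φ in (0, π) with φ ≠ π/2. -/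
/-!
By the quotient rule and `sin² + cos² = 1`, `f'(φ) = (sin φ - φ cos φ) / sin³ φ`. The numerator
has the sign of `φ` on `(-π, π)`: for `0 < φ < π/2` this is `φ < tan φ`, and for `π/2 ≤ φ < π`
both `sin φ` and `-φ cos φ` are nonnegative, the first strictly. Numerator and `sin³ φ` are both
odd, so the derivative is positive on `(-π, 0) ∪ (0, π)`, and the mean value theorem concludes.
-/

open Real Set

theorem strictMonoOn_of_hasDerivAt_pos {D : Set ℝ} (hD : Convex ℝ D)
    {f f' : ℝ → ℝ} (hf : ∀ x ∈ D, HasDerivAt f (f' x) x) (hf' : ∀ x ∈ D, 0 < f' x) :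
    StrictMonoOn f D :=
  strictMonoOn_of_hasDerivWithinAt_pos hD (fun x hx ↦ (hf x hx).continuousAt.continuousWithinAt)
    (fun x hx ↦ (hf x (interior_subset hx)).hasDerivWithinAt)
    (fun x hx ↦ hf' x (interior_subset hx))

namespace Real

theorem sin_sub_mul_cos_pos {x : ℝ} (h0 : 0 < x) (hπ : x < π) : 0 < sin x - x * cos x := by
  have hs : 0 < sin x := sin_pos_of_pos_of_lt_pi h0 hπ
  rcases lt_or_ge x (π / 2) with hx | hx
  · have hc : 0 < cos x := cos_pos_of_mem_Ioo ⟨by linarith [pi_pos], hx⟩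
    have ht : x < sin x / cos x := tan_eq_sin_div_cos x ▸ lt_tan h0 hx
    rw [lt_div_iff₀ hc] at ht
    linarith
  · have hc : cos x ≤ 0 := cos_nonpos_of_pi_div_two_le_of_le hx (by linarith)
    nlinarith

theorem sin_sub_mul_cos_neg {x : ℝ} (hπ : -π < x) (h0 : x < 0) : sin x - x * cos x < 0 := by
  have h := sin_sub_mul_cos_pos (x := -x) (by linarith) (by linarith)
  rw [sin_neg, cos_neg] at h
  linarith

theorem cos_ne_zero_of_mem_Ioo_of_ne_pi_div_two {x : ℝ} (hx : x ∈ Ioo 0 π) (hne : x ≠ π / 2) :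
    cos x ≠ 0 := by
  intro hc
  refine hne (injOn_cos (Ioo_subset_Icc_self hx) ⟨by linarith [pi_pos], by linarith [pi_pos]⟩ ?_)
  rw [hc, cos_pi_div_two]

theorem tan_sub_div_tan_mul_sin_sq {φ : ℝ} (hc : cos φ ≠ 0) :
    (tan φ - φ) / (tan φ * sin φ ^ 2) = (sin φ - φ * cos φ) / sin φ ^ 3 := by
  rw [tan_eq_sin_div_cos]
  field_simp

end Real

/-- For a circular segment of radius `r` whose arc subtends the angle `2φ` at the centre, the area
is `r² (φ - sin φ cos φ)` and the chord is `2 r sin φ`; this is twice the area over the chord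
squared. -/
noncomputable def segmentAreaRatio (φ : ℝ) : ℝ := (φ - sin φ * cos φ) / (2 * sin φ ^ 2)

theorem hasDerivAt_segmentAreaRatio {φ : ℝ} (hs : sin φ ≠ 0) :
    HasDerivAt segmentAreaRatio ((sin φ - φ * cos φ) / sin φ ^ 3) φ := by
  have hnum : HasDerivAt (fun φ ↦ φ - sin φ * cos φ)
      (1 - (cos φ * cos φ + sin φ * -sin φ)) φ :=
    (hasDerivAt_id φ).sub ((hasDerivAt_sin φ).mul (hasDerivAt_cos φ))
  have hden : HasDerivAt (fun φ ↦ 2 * sin φ ^ 2) (2 * (2 * sin φ ^ 1 * cos φ)) φ :=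
    ((hasDerivAt_sin φ).pow 2).const_mul 2
  refine (hnum.div hden (by positivity)).congr_deriv ?_
  rw [div_eq_div_iff (by positivity) (by positivity)]
  linear_combination (2 * sin φ ^ 5) * sin_sq_add_cos_sq φ

theorem segmentAreaRatio_deriv_pos {φ : ℝ} (hφ : φ ∈ Ioo (-π) 0 ∪ Ioo 0 π) :
    0 < (sin φ - φ * cos φ) / sin φ ^ 3 := by
  rcases hφ with ⟨h1, h2⟩ | ⟨h1, h2⟩
  · exact div_pos_of_neg_of_neg (sin_sub_mul_cos_neg h1 h2)
      (Odd.pow_neg (by decide) (sin_neg_of_neg_of_neg_pi_lt h2 h1))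
  · exact div_pos (sin_sub_mul_cos_pos h1 h2) (pow_pos (sin_pos_of_pos_of_lt_pi h1 h2) 3)

theorem strictMonoOn_segmentAreaRatio {a b : ℝ} (hab : Ioo a b ⊆ Ioo (-π) 0 ∪ Ioo 0 π) :
    StrictMonoOn segmentAreaRatio (Ioo a b) := by
  have hsin : ∀ x ∈ Ioo a b, sin x ≠ 0 := fun x hx hs ↦ by
    rcases hab hx with ⟨h1, h2⟩ | ⟨h1, h2⟩ <;>
      linarith [(sin_eq_zero_iff_of_lt_of_lt (by linarith [pi_pos]) (by linarith [pi_pos])).1 hs]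
  exact strictMonoOn_of_hasDerivAt_pos (convex_Ioo a b)
    (fun x hx ↦ hasDerivAt_segmentAreaRatio (hsin x hx))
    (fun _ hx ↦ segmentAreaRatio_deriv_pos (hab hx))

theorem schwarz_f_strictMono :
    StrictMonoOn (fun φ : ℝ => (φ - Real.sin φ * Real.cos φ) / (2 * Real.sin φ ^ 2))
      (Set.Ioo (-Real.pi) 0) ∧
    StrictMonoOn (fun φ : ℝ => (φ - Real.sin φ * Real.cos φ) / (2 * Real.sin φ ^ 2))
      (Set.Ioo 0 Real.pi) ∧
    (∀ φ ∈ Set.Ioo (0:ℝ) Real.pi, φ ≠ Real.pi / 2 →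
      HasDerivAt (fun φ : ℝ => (φ - Real.sin φ * Real.cos φ) / (2 * Real.sin φ ^ 2))
        ((Real.tan φ - φ) / (Real.tan φ * Real.sin φ ^ 2)) φ ∧
      0 < (Real.tan φ - φ) / (Real.tan φ * Real.sin φ ^ 2)) := by
  refine ⟨strictMonoOn_segmentAreaRatio subset_union_left,
    strictMonoOn_segmentAreaRatio subset_union_right, fun φ hφ hne ↦ ?_⟩
  rw [tan_sub_div_tan_mul_sin_sq (cos_ne_zero_of_mem_Ioo_of_ne_pi_div_two hφ hne)]
  exact ⟨hasDerivAt_segmentAreaRatio (sin_pos_of_pos_of_lt_pi hφ.1 hφ.2).ne',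
    segmentAreaRatio_deriv_pos (Or.inr hφ)⟩
end

section
/- The function f(φ) = (φ − sin φ cos φ)/(2 sin² φ) maps the interval (0, π) bijectively and continuously onto (0, ∞); more precisely f(φ) → 0 as φ → 0⁺ and f(φ) → ∞ as φ → π⁻, and f is strictly monotone, so for every c > 0 the equation f(φ) = c has a unique solution φ ∈ (0, π). -/
/-!
The numerator `φ - sin φ cos φ = (2φ - sin 2φ)/2` has derivative `2 sin² φ`, and the quotient rule
gives `f' = (sin φ - φ cos φ) / sin³ φ`, which is positive on `(0, π)` because `φ cos φ < sin φ`
there (`tan φ > φ` below `π/2`, trivially above). The same inequality at `2φ` reads `f(φ) < φ`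
for `φ < π/2`, which squeezes `f` to `0` at `0⁺`; at `π⁻` the numerator tends to `π` while the
denominator tends to `0⁺`. Existence of a solution of `f = c` is then the intermediate value
theorem, uniqueness is strict monotonicity.
-/

open Real Set Filter Topology

noncomputable def schwarzF (φ : ℝ) : ℝ := (φ - sin φ * cos φ) / (2 * sin φ ^ 2)

theorem mul_cos_lt_sin {x : ℝ} (h0 : 0 < x) (hπ : x < π) : x * cos x < sin x := by
  rcases lt_or_ge x (π / 2) with hx | hx
  · have hcos : 0 < cos x := cos_pos_of_mem_Ioo ⟨by linarith [pi_pos], hx⟩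
    have htan : x < sin x / cos x := tan_eq_sin_div_cos x ▸ lt_tan h0 hx
    exact (lt_div_iff₀ hcos).mp htan
  · have hcos : cos x ≤ 0 := cos_nonpos_of_pi_div_two_le_of_le hx (by linarith)
    have hsin : 0 < sin x := sin_pos_of_pos_of_lt_pi h0 hπ
    nlinarith

theorem sin_mul_cos_lt {x : ℝ} (h0 : 0 < x) : sin x * cos x < x := by
  have h := sin_lt (mul_pos two_pos h0)
  rw [sin_two_mul] at h
  linarith

theorem hasDerivAt_schwarzF {x : ℝ} (hx : sin x ≠ 0) :
    HasDerivAt schwarzF ((sin x - x * cos x) / sin x ^ 3) x := by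
  have hnum : HasDerivAt (fun φ => φ - sin φ * cos φ)
      (1 - (cos x * cos x + sin x * -sin x)) x :=
    (hasDerivAt_id x).sub ((hasDerivAt_sin x).mul (hasDerivAt_cos x))
  have hden : HasDerivAt (fun φ => 2 * sin φ ^ 2) (2 * (2 * sin x ^ 1 * cos x)) x :=
    ((hasDerivAt_sin x).pow 2).const_mul 2
  refine (hnum.div hden (by positivity)).congr_deriv ?_
  field_simp
  linear_combination sin x * sin_sq_add_cos_sq x

theorem continuousOn_schwarzF : ContinuousOn schwarzF (Ioo 0 π) := fun _ hx =>
  (hasDerivAt_schwarzF (sin_pos_of_pos_of_lt_pi hx.1 hx.2).ne').continuousAt.continuousWithinAt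

theorem strictMonoOn_schwarzF : StrictMonoOn schwarzF (Ioo 0 π) := by
  refine strictMonoOn_of_deriv_pos (convex_Ioo 0 π) continuousOn_schwarzF fun x hx => ?_
  rw [interior_Ioo] at hx
  have hsin : 0 < sin x := sin_pos_of_pos_of_lt_pi hx.1 hx.2
  rw [(hasDerivAt_schwarzF hsin.ne').deriv]
  exact div_pos (sub_pos.mpr (mul_cos_lt_sin hx.1 hx.2)) (by positivity)

theorem schwarzF_pos {φ : ℝ} (h0 : 0 < φ) (hπ : φ < π) : 0 < schwarzF φ := by
  have hsin : 0 < sin φ := sin_pos_of_pos_of_lt_pi h0 hπ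
  exact div_pos (sub_pos.mpr (sin_mul_cos_lt h0)) (by positivity)

theorem schwarzF_lt_self {φ : ℝ} (h0 : 0 < φ) (hφ : φ < π / 2) : schwarzF φ < φ := by
  have hsin : 0 < sin φ := sin_pos_of_pos_of_lt_pi h0 (by linarith [pi_pos])
  have h := mul_cos_lt_sin (mul_pos two_pos h0) (by linarith)
  rw [sin_two_mul, cos_two_mul_eq_one_sub] at h
  rw [schwarzF, div_lt_iff₀ (by positivity)]
  linarith

theorem tendsto_schwarzF_nhdsGT_zero : Tendsto schwarzF (𝓝[>] 0) (𝓝 0) := by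
  refine squeeze_zero' ?_ ?_ (tendsto_nhdsWithin_of_tendsto_nhds tendsto_id)
  · filter_upwards [Ioo_mem_nhdsGT pi_pos] with x hx
    exact (schwarzF_pos hx.1 hx.2).le
  · filter_upwards [Ioo_mem_nhdsGT (half_pos pi_pos)] with x hx
    exact (schwarzF_lt_self hx.1 hx.2).le

theorem tendsto_schwarzF_nhdsLT_pi : Tendsto schwarzF (𝓝[<] π) atTop := by
  have hnum : Tendsto (fun φ => φ - sin φ * cos φ) (𝓝[<] π) (𝓝 π) := by
    have h : Continuous fun φ => φ - sin φ * cos φ := by fun_prop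
    simpa using (h.tendsto π).mono_left nhdsWithin_le_nhds
  have hden : Tendsto (fun φ => 2 * sin φ ^ 2) (𝓝[<] π) (𝓝[>] 0) := by
    refine tendsto_nhdsWithin_of_tendsto_nhds_of_eventually_within _ ?_ ?_
    · have h : Continuous fun φ => 2 * sin φ ^ 2 := by fun_prop
      simpa using (h.tendsto π).mono_left nhdsWithin_le_nhds
    · filter_upwards [Ioo_mem_nhdsLT pi_pos] with x hx
      have hsin : 0 < sin x := sin_pos_of_pos_of_lt_pi hx.1 hx.2
      exact mem_Ioi.mpr (by positivity)
  exact hnum.pos_mul_atTop pi_pos hden.inv_tendsto_nhdsGT_zero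

theorem exists_mem_Ioo_eq_of_tendsto {f : ℝ → ℝ} {a b l c : ℝ} (hab : a < b)
    (hf : ContinuousOn f (Ioo a b)) (ha : Tendsto f (𝓝[>] a) (𝓝 l))
    (hb : Tendsto f (𝓝[<] b) atTop) (hlc : l < c) : ∃ x ∈ Ioo a b, f x = c := by
  obtain ⟨x, hfx, hx⟩ := ((ha.eventually (eventually_lt_nhds hlc)).and (Ioo_mem_nhdsGT hab)).exists
  obtain ⟨y, hfy, hy⟩ := ((hb.eventually_gt_atTop c).and (Ioo_mem_nhdsLT hab)).exists
  exact isPreconnected_Ioo.intermediate_value hx hy hf ⟨hfx.le, hfy.le⟩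

theorem schwarz_f_bijective :
    StrictMonoOn (fun φ : ℝ => (φ - Real.sin φ * Real.cos φ) / (2 * Real.sin φ ^ 2))
      (Set.Ioo 0 Real.pi) ∧
    ContinuousOn (fun φ : ℝ => (φ - Real.sin φ * Real.cos φ) / (2 * Real.sin φ ^ 2))
      (Set.Ioo 0 Real.pi) ∧
    Tendsto (fun φ : ℝ => (φ - Real.sin φ * Real.cos φ) / (2 * Real.sin φ ^ 2))
      (nhdsWithin 0 (Set.Ioi 0)) (nhds 0) ∧
    Tendsto (fun φ : ℝ => (φ - Real.sin φ * Real.cos φ) / (2 * Real.sin φ ^ 2))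
      (nhdsWithin Real.pi (Set.Iio Real.pi)) atTop ∧
    ∀ c : ℝ, 0 < c → ∃! φ : ℝ, φ ∈ Set.Ioo (0:ℝ) Real.pi ∧
      (φ - Real.sin φ * Real.cos φ) / (2 * Real.sin φ ^ 2) = c := by
  refine ⟨strictMonoOn_schwarzF, continuousOn_schwarzF, tendsto_schwarzF_nhdsGT_zero,
    tendsto_schwarzF_nhdsLT_pi, fun c hc => ?_⟩
  obtain ⟨φ, hφ, hφc⟩ := exists_mem_Ioo_eq_of_tendsto pi_pos continuousOn_schwarzF
    tendsto_schwarzF_nhdsGT_zero tendsto_schwarzF_nhdsLT_pi hc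
  exact ⟨φ, ⟨hφ, hφc⟩, fun ψ ⟨hψ, hψc⟩ =>
    strictMonoOn_schwarzF.injOn hψ hφ (hψc.trans hφc.symm)⟩
end

section
/- Let Q : [x₀, x₁] → ℝ be C¹, nonnegative, with Q(x₀) = Q(x₁) = 0, and let V = ∫_{x₀}^{x₁} Q(x) dx > 0. Then ∫_{x₀}^{x₁} √(4πQ(x) + Q'(x)²) dx ≥ (36πV²)^{1/3}, i.e., the surface area of a body of revolution with cross-sectional area function Q is at least that of the ball of the same volume V. -/
/-!
Calibration. Let `a` be the radius of the ball of volume `V` and `m(x) = ∫_{x₀}^x Q`. Let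
`u = G(m) ∈ (-1, 1)` (`G = ballCos a`) be the root of `u - u³/3 = 2/3 - m/(πa³)`; for the ball
itself, `u = -h/a` where `h` is the height (from the centre) below which it has volume `m`.
Then `F = Q·G(m) + 3m/a` has `F' = Q'u - Q²/(πa³(1 - u²)) + 3Q/a ≤ √(4πQ + Q'²)`. Indeed by AM–GM
`3Q/a ≤ 2√(πQ(1 - u²)) + Q²/(πa³(1 - u²))`, the product of the three terms being `(Q/a)³`
(which is what forces `G`), and by Cauchy–Schwarz `2√(πQ(1 - u²)) + Q'u ≤ √(4πQ + Q'²)`.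
Integrating, the lateral area is at least `F(x₁) - F(x₀) = 3V/a = 4πa² = (36πV²)^{1/3}`.
-/

open Real Set intervalIntegral

-- Viète's trigonometric solution of `u³ - 3u = 2y`, the root lying in `[-1, 1]`.
noncomputable def vieteRoot (y : ℝ) : ℝ := 2 * cos (arccos y / 3 - 2 * π / 3)

theorem continuous_vieteRoot : Continuous vieteRoot := by
  unfold vieteRoot; fun_prop

theorem abs_vieteRoot_le (y : ℝ) : |vieteRoot y| ≤ 2 := by
  simpa [vieteRoot, abs_mul] using abs_cos_le_one (arccos y / 3 - 2 * π / 3)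

theorem vieteRoot_cube_sub {y : ℝ} (hy : y ∈ Icc (-1) 1) :
    vieteRoot y ^ 3 - 3 * vieteRoot y = 2 * y := by
  have h3 : cos (3 * (arccos y / 3 - 2 * π / 3)) = y := by
    rw [show 3 * (arccos y / 3 - 2 * π / 3) = arccos y - 2 * π by ring, cos_sub_two_pi,
      cos_arccos hy.1 hy.2]
  rw [cos_three_mul] at h3
  unfold vieteRoot
  linear_combination 2 * h3

theorem vieteRoot_mem_Ioo {y : ℝ} (hy : y ∈ Ioo (-1) 1) : vieteRoot y ∈ Ioo (-1) 1 := by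
  have h0 : 0 < arccos y := arccos_pos.2 hy.2
  have hπ : arccos y < π := arccos_lt_pi.2 hy.1
  have hcos_lt : cos (2 * π / 3 - arccos y / 3) < cos (π / 3) :=
    cos_lt_cos_of_nonneg_of_le_pi (by positivity) (by linarith) (by linarith)
  have hlt_cos : cos (2 * π / 3) < cos (2 * π / 3 - arccos y / 3) :=
    cos_lt_cos_of_nonneg_of_le_pi (by linarith) (by linarith) (by linarith)
  have h23 : cos (2 * π / 3) = -(1 / 2) := by
    rw [show 2 * π / 3 = π - π / 3 by ring, cos_pi_sub, cos_pi_div_three]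
  rw [cos_pi_div_three] at hcos_lt
  rw [h23] at hlt_cos
  rw [vieteRoot, ← cos_neg, neg_sub]
  constructor <;> linarith

theorem hasDerivAt_vieteRoot {y : ℝ} (hy : y ∈ Ioo (-1) 1) :
    HasDerivAt vieteRoot (2 / (3 * (vieteRoot y ^ 2 - 1))) y := by
  have hdiff : DifferentiableAt ℝ vieteRoot y := by
    have := differentiableAt_arccos.2 ⟨hy.1.ne', hy.2.ne⟩
    unfold vieteRoot; fun_prop
  have hD := hdiff.hasDerivAt
  have hcubic : HasDerivAt (fun z => vieteRoot z ^ 3 - 3 * vieteRoot z)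
      ((3 * vieteRoot y ^ 2 - 3) * deriv vieteRoot y) y := by
    refine ((hD.pow 3).sub (hD.const_mul 3)).congr_deriv ?_
    push_cast
    ring
  have hlin : HasDerivAt (fun z => vieteRoot z ^ 3 - 3 * vieteRoot z) 2 y := by
    refine ((hasDerivAt_id y).const_mul 2).congr_of_eventuallyEq ?_ |>.congr_deriv (mul_one 2)
    filter_upwards [Ioo_mem_nhds hy.1 hy.2] with z hz
    exact vieteRoot_cube_sub (Ioo_subset_Icc_self hz)
  have hu : vieteRoot y ^ 2 - 1 ≠ 0 := by
    have := vieteRoot_mem_Ioo hy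
    nlinarith [this.1, this.2]
  refine hD.congr_deriv ?_
  rw [eq_div_iff (mul_ne_zero three_ne_zero hu)]
  linear_combination -hlin.unique hcubic

theorem three_mul_le_two_mul_add {A B r : ℝ} (hA : 0 ≤ A) (hB : 0 ≤ B) (hr : 0 ≤ r)
    (h : A ^ 2 * B = r ^ 3) : 3 * r ≤ 2 * A + B := by
  rcases hA.eq_or_lt with rfl | hA
  · have : r = 0 := by simpa [eq_comm] using h
    linarith
  have key : A ^ 2 * (2 * A + B - 3 * r) = (A - r) ^ 2 * (2 * A + r) := by
    linear_combination h
  have : 0 ≤ A ^ 2 * (2 * A + B - 3 * r) := key ▸ by positivity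
  nlinarith [(mul_nonneg_iff_of_pos_left (by positivity : 0 < A ^ 2)).1 this]

theorem sqrt_mul_sqrt_one_sub_sq_add_mul_le {x : ℝ} (p : ℝ) {u : ℝ} (hx : 0 ≤ x)
    (hu : u ^ 2 ≤ 1) : √x * √(1 - u ^ 2) + p * u ≤ √(x + p ^ 2) := by
  have hs := sq_sqrt (sub_nonneg.2 hu)
  have hx' := sq_sqrt hx
  apply le_sqrt_of_sq_le
  nlinarith [sq_nonneg (√x * u - p * √(1 - u ^ 2))]

theorem HasDerivAt.mul_isBigO_one_of_eq_zero {𝕜 : Type*} [NontriviallyNormedField 𝕜]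
    {f g : 𝕜 → 𝕜} {x : 𝕜} (hf : HasDerivAt f 0 x) (hfx : f x = 0)
    (hg : g =O[nhds x] fun _ => (1 : 𝕜)) :
    HasDerivAt (fun y => f y * g y) 0 x := by
  rw [hasDerivAt_iff_isLittleO] at hf ⊢
  simpa [hfx] using hf.mul_isBigO hg

noncomputable def ballCos (a m : ℝ) : ℝ := vieteRoot (3 * m / (2 * π * a ^ 3) - 1)

section ballCos

variable {a m : ℝ}

theorem three_mul_div_sub_one_mem_Ioo (ha : 0 < a) (hm : m ∈ Ioo 0 (4 * π * a ^ 3 / 3)) :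
    3 * m / (2 * π * a ^ 3) - 1 ∈ Ioo (-1) 1 := by
  have : 0 < 2 * π * a ^ 3 := by positivity
  constructor
  · have : 0 < 3 * m / (2 * π * a ^ 3) := by have := hm.1; positivity
    linarith
  · rw [sub_lt_iff_lt_add, div_lt_iff₀ this]
    linarith [hm.2]

theorem ballCos_mem_Ioo (ha : 0 < a) (hm : m ∈ Ioo 0 (4 * π * a ^ 3 / 3)) :
    ballCos a m ∈ Ioo (-1) 1 :=
  vieteRoot_mem_Ioo (three_mul_div_sub_one_mem_Ioo ha hm)

theorem hasDerivAt_ballCos (ha : 0 < a) (hm : m ∈ Ioo 0 (4 * π * a ^ 3 / 3)) :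
    HasDerivAt (ballCos a) (1 / (π * a ^ 3 * (ballCos a m ^ 2 - 1))) m := by
  have hu : ballCos a m ^ 2 - 1 ≠ 0 := by
    have := ballCos_mem_Ioo ha hm
    nlinarith [this.1, this.2]
  have hy : HasDerivAt (fun m => 3 * m / (2 * π * a ^ 3) - 1) (3 / (2 * π * a ^ 3)) m := by
    simpa using ((hasDerivAt_id m).const_mul 3).div_const (2 * π * a ^ 3) |>.sub_const 1
  refine ((hasDerivAt_vieteRoot (three_mul_div_sub_one_mem_Ioo ha hm)).comp m hy).congr_deriv ?_
  unfold ballCos at hu ⊢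
  field_simp

end ballCos

noncomputable def calibrationRate (a q p u : ℝ) : ℝ :=
  p * u + q ^ 2 / (π * a ^ 3 * (u ^ 2 - 1)) + 3 * q / a

theorem calibrationRate_le_sqrt {a q u : ℝ} (p : ℝ) (ha : 0 < a) (hq : 0 ≤ q) (hu : u ^ 2 < 1) :
    calibrationRate a q p u ≤ √(4 * π * q + p ^ 2) := by
  have hu' : 0 < 1 - u ^ 2 := by linarith
  set C := √(4 * π * q) * √(1 - u ^ 2)
  have hC2 : C ^ 2 = 4 * π * q * (1 - u ^ 2) := by
    rw [mul_pow, sq_sqrt (by positivity), sq_sqrt hu'.le]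
  have hamgm : 3 * (q / a) ≤ 2 * (C / 2) + q ^ 2 / (π * a ^ 3 * (1 - u ^ 2)) := by
    refine three_mul_le_two_mul_add (by positivity) (by positivity) (by positivity) ?_
    rw [div_pow, hC2]
    field_simp
    ring
  have hcs : C + p * u ≤ √(4 * π * q + p ^ 2) :=
    sqrt_mul_sqrt_one_sub_sq_add_mul_le p (by positivity) hu.le
  have hrate : calibrationRate a q p u =
      p * u - q ^ 2 / (π * a ^ 3 * (1 - u ^ 2)) + 3 * (q / a) := by
    rw [calibrationRate, show π * a ^ 3 * (u ^ 2 - 1) = -(π * a ^ 3 * (1 - u ^ 2)) by ring,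
      div_neg]
    ring
  linarith

section Primitive

variable {Q Q' : ℝ → ℝ} {x₀ x₁ x : ℝ}

theorem primitive_mem_Icc (hQc : ContinuousOn Q (Icc x₀ x₁)) (hQ0 : ∀ x ∈ Icc x₀ x₁, 0 ≤ Q x)
    (hx : x ∈ Icc x₀ x₁) : ∫ t in x₀..x, Q t ∈ Icc 0 (∫ t in x₀..x₁, Q t) :=
  ⟨integral_nonneg hx.1 fun t ht => hQ0 t ⟨ht.1, ht.2.trans hx.2⟩,
    integral_mono_interval le_rfl hx.1 hx.2
      (MeasureTheory.ae_restrict_of_forall_mem measurableSet_Ioc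
        fun t ht => hQ0 t (Ioc_subset_Icc_self ht))
      (hQc.intervalIntegrable_of_Icc (hx.1.trans hx.2))⟩

theorem hasDerivAt_primitive (hQc : ContinuousOn Q (Icc x₀ x₁)) (hx : x ∈ Ioo x₀ x₁) :
    HasDerivAt (fun y => ∫ t in x₀..y, Q t) (Q x) x :=
  integral_hasDerivAt_right
    ((hQc.mono (Icc_subset_Icc_right hx.2.le)).intervalIntegrable_of_Icc hx.1.le)
    ((hQc.mono Ioo_subset_Icc_self).stronglyMeasurableAtFilter isOpen_Ioo x hx)
    (hQc.continuousAt (Icc_mem_nhds hx.1 hx.2))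

theorem eq_zero_and_eq_zero_or_primitive_mem_Ioo
    (hderiv : ∀ x ∈ Icc x₀ x₁, HasDerivAt Q (Q' x) x) (hQ0 : ∀ x ∈ Icc x₀ x₁, 0 ≤ Q x)
    (hx : x ∈ Ioo x₀ x₁) :
    (Q x = 0 ∧ Q' x = 0) ∨ ∫ t in x₀..x, Q t ∈ Ioo 0 (∫ t in x₀..x₁, Q t) := by
  rw [or_iff_not_imp_right]
  intro hm
  have hQc : ContinuousOn Q (Icc x₀ x₁) := HasDerivAt.continuousOn hderiv
  have hnhds : Icc x₀ x₁ ∈ nhds x := Icc_mem_nhds hx.1 hx.2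
  have hbounds : ∀ y ∈ Icc x₀ x₁, ∫ t in x₀..y, Q t ∈ Icc 0 (∫ t in x₀..x₁, Q t) :=
    fun y hy => primitive_mem_Icc hQc hQ0 hy
  have hextr : IsLocalExtr (fun y => ∫ t in x₀..y, Q t) x := by
    obtain ⟨h0, hV⟩ := hbounds x (Ioo_subset_Icc_self hx)
    rcases h0.eq_or_lt' with h0 | h0
    · left
      filter_upwards [hnhds] with y hy using h0 ▸ (hbounds y hy).1
    · right
      have : ∫ t in x₀..x, Q t = ∫ t in x₀..x₁, Q t := by
        by_contra hne
        exact hm ⟨h0, lt_of_le_of_ne hV hne⟩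
      filter_upwards [hnhds] with y hy using this ▸ (hbounds y hy).2
  have hQx : Q x = 0 := hextr.hasDerivAt_eq_zero (hasDerivAt_primitive hQc hx)
  have hmin : IsLocalMin Q x := by
    filter_upwards [hnhds] with y hy using hQx ▸ hQ0 y hy
  exact ⟨hQx, hmin.hasDerivAt_eq_zero (hderiv x (Ioo_subset_Icc_self hx))⟩

end Primitive

noncomputable def calibration (a : ℝ) (Q : ℝ → ℝ) (x₀ x : ℝ) : ℝ :=
  Q x * ballCos a (∫ t in x₀..x, Q t) + 3 * (∫ t in x₀..x, Q t) / a

section Calibration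

variable {a x₀ x₁ : ℝ} {Q Q' : ℝ → ℝ}

theorem hasDerivAt_calibration (ha : 0 < a) (hderiv : ∀ x ∈ Icc x₀ x₁, HasDerivAt Q (Q' x) x)
    (hQ0 : ∀ x ∈ Icc x₀ x₁, 0 ≤ Q x) (hV : ∫ x in x₀..x₁, Q x = 4 * π * a ^ 3 / 3) {x : ℝ}
    (hx : x ∈ Ioo x₀ x₁) :
    HasDerivAt (calibration a Q x₀)
      (calibrationRate a (Q x) (Q' x) (ballCos a (∫ t in x₀..x, Q t))) x := by
  have hm := hasDerivAt_primitive (HasDerivAt.continuousOn hderiv) hx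
  have hvol : HasDerivAt (fun y => 3 * (∫ t in x₀..y, Q t) / a) (3 * Q x / a) x :=
    (hm.const_mul 3).div_const a
  rcases eq_zero_and_eq_zero_or_primitive_mem_Ioo hderiv hQ0 hx with ⟨hQx, hQ'x⟩ | hmem
  · have hbdd : (fun y => ballCos a (∫ t in x₀..y, Q t)) =O[nhds x] fun _ => (1 : ℝ) :=
      .of_bound 2 (.of_forall fun _ => by
        rw [norm_one, mul_one, Real.norm_eq_abs]; exact abs_vieteRoot_le _)
    have hQ : HasDerivAt Q 0 x := hQ'x ▸ hderiv x (Ioo_subset_Icc_self hx)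
    refine ((hQ.mul_isBigO_one_of_eq_zero hQx hbdd).add hvol).congr_deriv ?_
    simp [calibrationRate, hQx, hQ'x]
  · rw [hV] at hmem
    refine (((hderiv x (Ioo_subset_Icc_self hx)).mul
      ((hasDerivAt_ballCos ha hmem).comp x hm)).add hvol).congr_deriv ?_
    simp only [calibrationRate, Function.comp_apply]
    ring

theorem calibrationRate_le_sqrt_of_mem_Ioo (ha : 0 < a)
    (hderiv : ∀ x ∈ Icc x₀ x₁, HasDerivAt Q (Q' x) x)
    (hQ0 : ∀ x ∈ Icc x₀ x₁, 0 ≤ Q x) (hV : ∫ x in x₀..x₁, Q x = 4 * π * a ^ 3 / 3) {x : ℝ}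
    (hx : x ∈ Ioo x₀ x₁) :
    calibrationRate a (Q x) (Q' x) (ballCos a (∫ t in x₀..x, Q t)) ≤
      √(4 * π * Q x + Q' x ^ 2) := by
  rcases eq_zero_and_eq_zero_or_primitive_mem_Ioo hderiv hQ0 hx with ⟨hQx, hQ'x⟩ | hmem
  · simp [calibrationRate, hQx, hQ'x]
  · rw [hV] at hmem
    have hu := ballCos_mem_Ioo ha hmem
    exact calibrationRate_le_sqrt _ ha (hQ0 x (Ioo_subset_Icc_self hx))
      (by nlinarith [hu.1, hu.2])

theorem four_pi_mul_sq_le_integral_sqrt (ha : 0 < a) (hx : x₀ ≤ x₁)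
    (hderiv : ∀ x ∈ Icc x₀ x₁, HasDerivAt Q (Q' x) x) (hcont : ContinuousOn Q' (Icc x₀ x₁))
    (hQ0 : ∀ x ∈ Icc x₀ x₁, 0 ≤ Q x) (hend : Q x₀ = 0 ∧ Q x₁ = 0)
    (hV : ∫ x in x₀..x₁, Q x = 4 * π * a ^ 3 / 3) :
    4 * π * a ^ 2 ≤ ∫ x in x₀..x₁, √(4 * π * Q x + Q' x ^ 2) := by
  have hQc : ContinuousOn Q (Icc x₀ x₁) := HasDerivAt.continuousOn hderiv
  have hFc : ContinuousOn (calibration a Q x₀) (Icc x₀ x₁) := by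
    have hm : ContinuousOn (fun x => ∫ t in x₀..x, Q t) (Icc x₀ x₁) := by
      simpa only [uIcc_of_le hx] using
        continuousOn_primitive_interval' (μ := MeasureTheory.volume)
          (hQc.intervalIntegrable_of_Icc hx) left_mem_uIcc
    exact (hQc.mul (continuous_vieteRoot.comp_continuousOn (by fun_prop))).add (by fun_prop)
  have hint : MeasureTheory.IntegrableOn (fun x => √(4 * π * Q x + Q' x ^ 2)) (Icc x₀ x₁) :=
    ((continuousOn_const.mul hQc).add (hcont.pow 2)).sqrt.integrableOn_Icc
  have hFTC := sub_le_integral_of_hasDeriv_right_of_le hx hFc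
    (fun x hx => (hasDerivAt_calibration ha hderiv hQ0 hV hx).hasDerivWithinAt) hint
    (fun x hx => calibrationRate_le_sqrt_of_mem_Ioo ha hderiv hQ0 hV hx)
  have hF : calibration a Q x₀ x₁ - calibration a Q x₀ x₀ = 4 * π * a ^ 2 := by
    simp only [calibration, hend, hV, integral_same]
    field_simp
    ring
  linarith

end Calibration

theorem schwarz_IIIa (x₀ x₁ : ℝ) (hx : x₀ < x₁) (Q Q' : ℝ → ℝ)
    (hderiv : ∀ x ∈ Set.Icc x₀ x₁, HasDerivAt Q (Q' x) x)
    (hcont : ContinuousOn Q' (Set.Icc x₀ x₁))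
    (hQ0 : ∀ x ∈ Set.Icc x₀ x₁, 0 ≤ Q x)
    (hend : Q x₀ = 0 ∧ Q x₁ = 0)
    (V : ℝ) (hV : V = ∫ x in x₀..x₁, Q x) (hVpos : 0 < V) :
    (∫ x in x₀..x₁, Real.sqrt (4 * Real.pi * Q x + (Q' x) ^ 2))
      ≥ (36 * Real.pi * V ^ 2) ^ ((1:ℝ)/3) := by
  set a := (3 * V / (4 * π)) ^ ((3 : ℕ)⁻¹ : ℝ)
  have ha : 0 < a := by positivity
  have ha3 : a ^ 3 = 3 * V / (4 * π) := rpow_inv_natCast_pow (by positivity) three_ne_zero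
  have hVa : V = 4 * π * a ^ 3 / 3 := by
    rw [ha3]
    field_simp
  have hsurface : (36 * π * V ^ 2) ^ ((1 : ℝ) / 3) = 4 * π * a ^ 2 := by
    rw [show 36 * π * V ^ 2 = (4 * π * a ^ 2) ^ 3 by rw [hVa]; ring, one_div,
      show (3 : ℝ) = (3 : ℕ) by norm_num, pow_rpow_inv_natCast (by positivity) three_ne_zero]
  rw [ge_iff_le, hsurface]
  exact four_pi_mul_sq_le_integral_sqrt ha hx.le hderiv hcont hQ0 hend (hV ▸ hVa)
end
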